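/- Let t ≥ 3 and k ≥ 1 be integers, let G be a finite simple graph that is K_{3,t}-forbidden, and let I_0 and I_r be independent sets of G with |I_0| = |I_r| = k. Suppose N is a set of vertices of G disjoint from I_0 ∪ I_r with |N| ≥ C(2k + t + 1, t + 2) (a binomial coefficient) such that all vertices of N have the same set S of neighbors within I_0 ∪ I_r, where |S ∩ I_0| ≤ 1 and |S ∩ I_r| ≤ 1. Then there exists a token-jumping reconfiguration sequence from I_0 to I_r. -/

import Mathlib

/-- `I` is an independent set of `G` (as a finset of vertices). -/
def IsIndepFinset {V : Type*} (G : SimpleGraph V) (I : Finset V) : Prop :=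
  ∀ u ∈ I, ∀ v ∈ I, ¬ G.Adj u v

/-- One token jump: exactly one token moves from `u ∈ I` to `v ∉ I`. -/
def TJStep {V : Type*} [DecidableEq V] (I J : Finset V) : Prop :=
  ∃ u v, u ∈ I ∧ v ∉ I ∧ I \ J = {u} ∧ J \ I = {v}

/-- `f 0, f 1, …, f ℓ` is a token-jumping reconfiguration sequence from `I` to `J`
in `G`, all of whose members are independent sets of cardinality `k`. -/
def TJSeq {V : Type*} [DecidableEq V] (G : SimpleGraph V) (k : ℕ)
    (I J : Finset V) (ℓ : ℕ) (f : ℕ → Finset V) : Prop :=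
  f 0 = I ∧ f ℓ = J ∧
  (∀ i ≤ ℓ, IsIndepFinset G (f i) ∧ (f i).card = k) ∧
  (∀ i < ℓ, TJStep (f i) (f (i + 1)))

/-- There is a token-jumping reconfiguration sequence from `I` to `J` in `G`. -/
def TJReachable {V : Type*} [DecidableEq V] (G : SimpleGraph V) (k : ℕ)
    (I J : Finset V) : Prop :=
  ∃ ℓ f, TJSeq G k I J ℓ f

/-- There is a token-jumping reconfiguration sequence from `I` to `J` in the
subgraph of `G` induced on the vertex set `W` (equivalently: a sequence in `G`
all of whose members are contained in `W`). -/
def TJReachableWithin {V : Type*} [DecidableEq V] (G : SimpleGraph V) (k : ℕ)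
    (I J : Finset V) (W : Finset V) : Prop :=
  ∃ ℓ f, TJSeq G k I J ℓ f ∧ ∀ i ≤ ℓ, f i ⊆ W

/-- `G` contains the complete bipartite graph `K_{p,q}` as a subgraph. -/
def ContainsKpq {V : Type*} (G : SimpleGraph V) (p q : ℕ) : Prop :=
  ∃ X Y : Finset V, Disjoint X Y ∧ X.card = p ∧ Y.card = q ∧
    ∀ x ∈ X, ∀ y ∈ Y, G.Adj x y

/-!
By Ramsey's theorem, `N` contains a clique on `t + 3` vertices or an independent set of size `2k`;
the clique would contain `K_{3,t}`, so there is an independent set `M ⊆ N` of size `k`. Every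
vertex of `M` sees exactly `S` inside `I₀ ∪ Iᵣ`, so at most one token of `I₀` has a neighbour in
`M`. Moving that token first, and the remaining ones afterwards in any order, onto the free
vertices of `M` reconfigures `I₀` into `M`. The same works for `Iᵣ`, and reversing the second
sequence joins the two.
-/

section Ramsey

variable {V : Type*} {G : SimpleGraph V}

theorem card_le_card_filter_adj_add_card_filter_compl_adj [DecidableEq V] [DecidableRel G.Adj]
    (W : Finset V) (v : V) :
    W.card ≤ (W.filter (G.Adj v)).card + (W.filter (Gᶜ.Adj v)).card + 1 := by
  have hcover : W ⊆ insert v (W.filter (G.Adj v) ∪ W.filter (Gᶜ.Adj v)) := by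
    intro w hw
    by_cases hvw : v = w
    · exact hvw ▸ Finset.mem_insert_self v _
    by_cases hadj : G.Adj v w
    · simp [hw, hadj]
    · simp [hw, hvw, hadj]
  exact (Finset.card_le_card hcover).trans <| (Finset.card_insert_le _ _).trans <|
    Nat.add_le_add_right (Finset.card_union_le _ _) 1

theorem exists_isNClique_or_isNIndepSet_of_choose_le (a b : ℕ) {W : Finset V}
    (hW : (a + b).choose a ≤ W.card) :
    (∃ s ⊆ W, G.IsNClique (a + 1) s) ∨ ∃ s ⊆ W, G.IsNIndepSet (b + 1) s := by
  classical
  obtain ⟨v, hv⟩ : W.Nonempty :=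
    Finset.card_pos.1 ((Nat.choose_pos (Nat.le_add_right a b)).trans_le hW)
  induction a generalizing b W v with
  | zero =>
    exact .inl ⟨{v}, Finset.singleton_subset_iff.2 hv, G.isNClique_one.2 ⟨v, rfl⟩⟩
  | succ a iha =>
    induction b generalizing W v with
    | zero =>
      refine .inr ⟨{v}, Finset.singleton_subset_iff.2 hv, ?_⟩
      exact G.isNClique_compl.1 (Gᶜ.isNClique_one.2 ⟨v, rfl⟩)
    | succ b ihb =>
      have hcard := card_le_card_filter_adj_add_card_filter_compl_adj (G := G) W v
      set N := W.filter (G.Adj v)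
      set N' := W.filter (Gᶜ.Adj v)
      have hpascal : (a + 1 + (b + 1)).choose (a + 1) =
          (a + (b + 1)).choose a + (a + 1 + b).choose (a + 1) := by
        rw [show a + 1 + (b + 1) = a + (b + 1) + 1 by omega, Nat.choose_succ_succ',
          show a + (b + 1) = a + 1 + b by omega]
      by_cases hN : (a + (b + 1)).choose a ≤ N.card
      · obtain ⟨u, hu⟩ : N.Nonempty :=
          Finset.card_pos.1 ((Nat.choose_pos (Nat.le_add_right _ _)).trans_le hN)
        rcases iha (b + 1) hN u hu with ⟨s, hsN, hs⟩ | ⟨s, hsN, hs⟩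
        · refine .inl ⟨insert v s, Finset.insert_subset hv (hsN.trans (Finset.filter_subset _ _)),
            hs.insert fun w hw => (Finset.mem_filter.1 (hsN hw)).2⟩
        · exact .inr ⟨s, hsN.trans (Finset.filter_subset _ _), hs⟩
      · have hN' : (a + 1 + b).choose (a + 1) ≤ N'.card := by omega
        obtain ⟨u, hu⟩ : N'.Nonempty :=
          Finset.card_pos.1 ((Nat.choose_pos (Nat.le_add_right _ _)).trans_le hN')
        rcases ihb hN' u hu with ⟨s, hsN', hs⟩ | ⟨s, hsN', hs⟩
        · exact .inl ⟨s, hsN'.trans (Finset.filter_subset _ _), hs⟩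
        · refine .inr ⟨insert v s, Finset.insert_subset hv (hsN'.trans (Finset.filter_subset _ _)),
            G.isNClique_compl.1 ?_⟩
          exact (G.isNClique_compl.2 hs).insert fun w hw => (Finset.mem_filter.1 (hsN' hw)).2

theorem containsKpq_of_isNClique {p q n : ℕ} {s : Finset V} (hs : G.IsNClique n s)
    (hpq : p + q ≤ n) : ContainsKpq G p q := by
  classical
  obtain ⟨X, hXs, hX⟩ := Finset.exists_subset_card_eq (show p ≤ s.card by rw [hs.card_eq]; omega)
  obtain ⟨Y, hYs, hY⟩ := Finset.exists_subset_card_eq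
    (show q ≤ (s \ X).card by rw [Finset.card_sdiff_of_subset hXs, hs.card_eq, hX]; omega)
  refine ⟨X, Y, Finset.disjoint_of_subset_right hYs Finset.disjoint_sdiff, hX, hY,
    fun x hx y hy => ?_⟩
  obtain ⟨hys, hyX⟩ := Finset.mem_sdiff.1 (hYs hy)
  exact hs.isClique (hXs hx) hys fun hxy => hyX (hxy ▸ hx)

theorem exists_isNIndepSet_of_not_containsKpq {p q a b : ℕ} (hG : ¬ ContainsKpq G p q)
    (hpq : p + q ≤ a + 1) {W : Finset V} (hW : (a + b).choose a ≤ W.card) :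
    ∃ s ⊆ W, G.IsNIndepSet (b + 1) s :=
  (exists_isNClique_or_isNIndepSet_of_choose_le a b hW).resolve_left
    fun ⟨_, _, hs⟩ => hG (containsKpq_of_isNClique hs hpq)

end Ramsey

section Independent

variable {V : Type*} {G : SimpleGraph V} {A B : Finset V}

theorem isIndepFinset_iff_isIndepSet : IsIndepFinset G A ↔ G.IsIndepSet (A : Set V) :=
  ⟨fun h _ hu _ hv _ => h _ hu _ hv, fun h _ hu _ hv huv => h hu hv huv.ne huv⟩

theorem IsIndepFinset.subset (hA : IsIndepFinset G A) (hBA : B ⊆ A) : IsIndepFinset G B :=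
  fun u hu v hv => hA u (hBA hu) v (hBA hv)

theorem IsIndepFinset.insert [DecidableEq V] {y : V} (hA : IsIndepFinset G A)
    (hy : ∀ z ∈ A, ¬ G.Adj z y) : IsIndepFinset G (insert y A) := by
  simp only [IsIndepFinset, Finset.mem_insert]
  rintro u (rfl | hu) v (rfl | hv)
  · exact G.irrefl
  · exact fun h => hy v hv h.symm
  · exact hy u hu
  · exact hA u hu v hv

end Independent

section Reconfiguration

variable {V : Type*} [DecidableEq V] {G : SimpleGraph V} {k : ℕ} {A B C : Finset V}

theorem TJStep.symm (h : TJStep A B) : TJStep B A := by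
  obtain ⟨u, v, -, -, hAB, hBA⟩ := h
  have hu : u ∈ A \ B := hAB ▸ Finset.mem_singleton_self u
  have hv : v ∈ B \ A := hBA ▸ Finset.mem_singleton_self v
  exact ⟨v, u, (Finset.mem_sdiff.1 hv).1, (Finset.mem_sdiff.1 hu).2, hBA, hAB⟩

theorem TJStep.insert_erase {x y : V} (hx : x ∈ A) (hy : y ∉ A) :
    TJStep A (insert y (A.erase x)) :=
  ⟨x, y, hx, hy, by ext; grind, by ext; grind⟩

theorem TJReachable.refl (hA : IsIndepFinset G A) (hAk : A.card = k) : TJReachable G k A A :=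
  ⟨0, fun _ => A, rfl, rfl, fun _ _ => ⟨hA, hAk⟩, fun _ h => absurd h (Nat.not_lt_zero _)⟩

theorem TJReachable.single (hA : IsIndepFinset G A) (hAk : A.card = k)
    (hB : IsIndepFinset G B) (hBk : B.card = k) (h : TJStep A B) : TJReachable G k A B := by
  refine ⟨1, fun i => if i = 0 then A else B, rfl, rfl, fun i _ => ?_, fun i hi => ?_⟩
  · dsimp only
    split_ifs
    exacts [⟨hA, hAk⟩, ⟨hB, hBk⟩]
  · obtain rfl : i = 0 := by omega
    simpa using h

theorem TJReachable.trans (hAB : TJReachable G k A B) (hBC : TJReachable G k B C) :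
    TJReachable G k A C := by
  obtain ⟨m, f, hf0, hfm, hf, hfstep⟩ := hAB
  obtain ⟨n, g, hg0, hgn, hg, hgstep⟩ := hBC
  set h : ℕ → Finset V := fun i => if i ≤ m then f i else g (i - m)
  have h_left : ∀ i ≤ m, h i = f i := fun i hi => if_pos hi
  have h_right : ∀ i, m ≤ i → h i = g (i - m) := by
    intro i hi
    rcases hi.eq_or_lt with rfl | hi
    · simp [h, hfm, hg0]
    · exact if_neg (by omega)
  refine ⟨m + n, h, (h_left 0 m.zero_le).trans hf0, ?_, fun i hi => ?_, fun i hi => ?_⟩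
  · rw [h_right _ (by omega), Nat.add_sub_cancel_left, hgn]
  · by_cases him : i ≤ m
    · rw [h_left i him]; exact hf i him
    · rw [h_right i (by omega)]; exact hg _ (by omega)
  · by_cases him : i < m
    · rw [h_left i him.le, h_left (i + 1) him]; exact hfstep i him
    · rw [h_right i (by omega), h_right (i + 1) (by omega), show i + 1 - m = i - m + 1 by omega]
      exact hgstep _ (by omega)

theorem TJReachable.symm (h : TJReachable G k A B) : TJReachable G k B A := by
  obtain ⟨ℓ, f, hf0, hfℓ, hf, hstep⟩ := h
  refine ⟨ℓ, fun i => f (ℓ - i), by simpa, by simpa, fun i _ => hf _ (Nat.sub_le ℓ i),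
    fun i hi => ?_⟩
  show TJStep (f (ℓ - i)) (f (ℓ - (i + 1)))
  rw [show ℓ - i = ℓ - (i + 1) + 1 by omega]
  exact (hstep _ (by omega)).symm

theorem tjReachable_of_adj_mem_of_card_le_one (hA : IsIndepFinset G A) (hB : IsIndepFinset G B)
    (hAk : A.card = k) (hBk : B.card = k) {s : Finset V} (hs : s.card ≤ 1)
    (hadj : ∀ x ∈ A, ∀ y ∈ B, G.Adj x y → x ∈ s) : TJReachable G k A B := by
  induction hn : (A \ B).card generalizing A with
  | zero =>
    have hAB : A ⊆ B := Finset.sdiff_eq_empty_iff_subset.1 (Finset.card_eq_zero.1 hn)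
    exact Finset.eq_of_subset_of_card_le hAB (by omega) ▸ .refl hA hAk
  | succ n ih =>
    -- the token on the vertex of `s`, if there is one in `A \ B`, has to move first
    obtain ⟨x, hx, hx_unique⟩ : ∃ x ∈ A \ B, ∀ z ∈ A \ B, z ∈ s → z = x := by
      by_cases hsAB : ∃ x ∈ A \ B, x ∈ s
      · obtain ⟨x, hx, hxs⟩ := hsAB
        exact ⟨x, hx, fun z _ hzs => Finset.card_le_one.1 hs z hzs x hxs⟩
      · obtain ⟨x, hx⟩ : (A \ B).Nonempty := Finset.card_pos.1 (by omega)
        exact ⟨x, hx, fun z hz hzs => absurd ⟨z, hz, hzs⟩ hsAB⟩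
    obtain ⟨y, hy⟩ : (B \ A).Nonempty := by
      rw [← Finset.card_pos, ← Finset.card_sdiff_comm (hAk.trans hBk.symm)]
      omega
    obtain ⟨hxA, -⟩ := Finset.mem_sdiff.1 hx
    obtain ⟨hyB, hyA⟩ := Finset.mem_sdiff.1 hy
    have hy_free : ∀ z ∈ A.erase x, ¬ G.Adj z y := by
      intro z hz hzy
      have hzA := Finset.mem_of_mem_erase hz
      have hzB : z ∉ B := fun hzB => hB z hzB y hyB hzy
      exact Finset.ne_of_mem_erase hz <|
        hx_unique z (Finset.mem_sdiff.2 ⟨hzA, hzB⟩) (hadj z hzA y hyB hzy)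
    have hA' : IsIndepFinset G (insert y (A.erase x)) :=
      (hA.subset (A.erase_subset x)).insert hy_free
    have hA'k : (insert y (A.erase x)).card = k := by
      rw [Finset.card_insert_of_notMem fun h => hyA (Finset.mem_of_mem_erase h),
        Finset.card_erase_add_one hxA, hAk]
    have hA'B : (insert y (A.erase x) \ B).card = n := by
      rw [Finset.insert_sdiff_of_mem _ hyB, Finset.erase_sdiff_comm,
        Finset.card_erase_of_mem hx, hn, Nat.add_sub_cancel]
    refine (TJReachable.single hA hAk hA' hA'k (.insert_erase hxA hyA)).trans
      (ih hA' hA'k (fun z hz w hw hzw => ?_) hA'B)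
    rcases Finset.mem_insert.1 hz with rfl | hz
    · exact absurd hzw (hB _ hyB _ hw)
    · exact hadj z (Finset.mem_of_mem_erase hz) w hw hzw

end Reconfiguration

theorem large_class_gives_sequence_general {V : Type*} [DecidableEq V]
    (G : SimpleGraph V) [DecidableRel G.Adj] (t k : ℕ) (hk : 1 ≤ k)
    (hforb : ¬ ContainsKpq G 3 t) (I0 Ir : Finset V)
    (hI0 : IsIndepFinset G I0) (hIr : IsIndepFinset G Ir)
    (hI0k : I0.card = k) (hIrk : Ir.card = k)
    (N : Finset V)
    (hNcard : (2 * k + t + 1).choose (t + 2) ≤ N.card)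
    (S : Finset V)
    (hS : ∀ v ∈ N, (I0 ∪ Ir).filter (fun u => G.Adj v u) = S)
    (hS0 : (S ∩ I0).card ≤ 1) (hSr : (S ∩ Ir).card ≤ 1) :
    TJReachable G k I0 Ir := by
  obtain ⟨D, hDN, hD⟩ := exists_isNIndepSet_of_not_containsKpq (a := t + 2) (b := 2 * k - 1) hforb
    (by omega) (by rwa [show t + 2 + (2 * k - 1) = 2 * k + t + 1 by omega])
  obtain ⟨M, hMD, hMk⟩ := Finset.exists_subset_card_eq (show k ≤ D.card by rw [hD.card_eq]; omega)
  have hM : IsIndepFinset G M := (isIndepFinset_iff_isIndepSet.2 hD.isIndepSet).subset hMD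
  have hS_of_adj : ∀ x ∈ I0 ∪ Ir, ∀ y ∈ M, G.Adj x y → x ∈ S := by
    intro x hx y hy hxy
    rw [← hS y (hDN (hMD hy))]
    exact Finset.mem_filter.2 ⟨hx, hxy.symm⟩
  have hI0M : TJReachable G k I0 M := tjReachable_of_adj_mem_of_card_le_one hI0 hM hI0k hMk hS0
    fun x hx y hy hxy => Finset.mem_inter.2 ⟨hS_of_adj x (Finset.mem_union_left _ hx) y hy hxy, hx⟩
  have hIrM : TJReachable G k Ir M := tjReachable_of_adj_mem_of_card_le_one hIr hM hIrk hMk hSr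
    fun x hx y hy hxy => Finset.mem_inter.2 ⟨hS_of_adj x (Finset.mem_union_right _ hx) y hy hxy, hx⟩
  exact hI0M.trans hIrM.symm

/-- if a large set `N`, disjoint from `I₀ ∪ Iᵣ`, has all its
vertices sharing the same neighborhood `S` inside `I₀ ∪ Iᵣ` with
`|S ∩ I₀| ≤ 1` and `|S ∩ Iᵣ| ≤ 1`, then `I₀` can be reconfigured into `Iᵣ`. -/
theorem large_class_gives_sequence {V : Type*} [Fintype V] [DecidableEq V]
    (G : SimpleGraph V) [DecidableRel G.Adj] (t k : ℕ) (ht : 3 ≤ t) (hk : 1 ≤ k)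
    (hforb : ¬ ContainsKpq G 3 t) (I0 Ir : Finset V)
    (hI0 : IsIndepFinset G I0) (hIr : IsIndepFinset G Ir)
    (hI0k : I0.card = k) (hIrk : Ir.card = k)
    (N : Finset V) (hNdisj : Disjoint N (I0 ∪ Ir))
    (hNcard : (2 * k + t + 1).choose (t + 2) ≤ N.card)
    (S : Finset V)
    (hS : ∀ v ∈ N, (I0 ∪ Ir).filter (fun u => G.Adj v u) = S)
    (hS0 : (S ∩ I0).card ≤ 1) (hSr : (S ∩ Ir).card ≤ 1) :
    TJReachable G k I0 Ir :=
  large_class_gives_sequence_general G t k hk hforb I0 Ir hI0 hIr hI0k hIrk N hNcard S hS hS0 hSr
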